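/- For every λ < -(c₁+c₂+c₃) with c₁,c₂,c₃ > 0, there exists a unique y > 0 such that ((1+y²)/y)·arctan(y)·(c₁+c₂+c₃) = -λ. -/

import Mathlib

/-!
Writing `y = tan θ` turns the left-hand side into `2θ / sin 2θ`, which increases strictly from `1`
to `∞` on `0 < θ < π / 2`; so `y ↦ ((1 + y²) / y) arctan y` is a strictly increasing bijection
from `(0, ∞)` onto `(1, ∞)`, and `-λ / (c₁ + c₂ + c₃) > 1` has exactly one preimage.
Here monotonicity comes from the sign of the derivative, and existence from the intermediate
value theorem between the bounds `shiftFun y < 1 + y²` and `y / 2 < shiftFun y` for `y ≥ 1`.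
-/

open Real Set

noncomputable def shiftFun (y : ℝ) : ℝ := ((1 + y ^ 2) / y) * arctan y

lemma arctan_lt_self {x : ℝ} (hx : 0 < x) : arctan x < x := by
  simpa only [tan_arctan] using lt_tan (arctan_pos.2 hx) (arctan_lt_pi_div_two x)

lemma shiftFun_hasDerivAt {y : ℝ} (hy : y ≠ 0) :
    HasDerivAt shiftFun (((y ^ 2 - 1) * arctan y + y) / y ^ 2) y := by
  have h := ((((hasDerivAt_id' y).fun_pow 2).const_add 1).fun_div (hasDerivAt_id' y) hy).fun_mul
    (hasDerivAt_arctan y)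
  refine h.congr_deriv ?_
  have : 1 + y ^ 2 ≠ 0 := by positivity
  field_simp
  ring

lemma shiftFun_deriv_num_pos {y : ℝ} (hy : 0 < y) : 0 < (y ^ 2 - 1) * arctan y + y := by
  rcases le_or_gt 1 y with h1 | h1
  · have : 0 ≤ y ^ 2 - 1 := by nlinarith
    have := arctan_pos.2 hy
    positivity
  · -- for `y < 1` the factor `y² - 1` is negative, so `arctan y < y` bounds the sum below by `y³`
    have hneg : y ^ 2 - 1 < 0 := by nlinarith
    nlinarith [mul_lt_mul_of_neg_left (arctan_lt_self hy) hneg, pow_pos hy 3]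

lemma continuousOn_shiftFun : ContinuousOn shiftFun (Ioi 0) := fun _ hy =>
  (shiftFun_hasDerivAt (ne_of_gt hy)).continuousAt.continuousWithinAt

lemma strictMonoOn_shiftFun : StrictMonoOn shiftFun (Ioi 0) := by
  refine strictMonoOn_of_deriv_pos (convex_Ioi 0) continuousOn_shiftFun fun y hy => ?_
  rw [interior_Ioi] at hy
  rw [(shiftFun_hasDerivAt (ne_of_gt hy)).deriv]
  exact div_pos (shiftFun_deriv_num_pos hy) (pow_pos hy 2)

lemma shiftFun_lt_one_add_sq {y : ℝ} (hy : 0 < y) : shiftFun y < 1 + y ^ 2 := by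
  calc shiftFun y < (1 + y ^ 2) / y * y := by
        unfold shiftFun
        gcongr
        exact arctan_lt_self hy
    _ = 1 + y ^ 2 := div_mul_cancel₀ _ (ne_of_gt hy)

lemma half_lt_shiftFun {y : ℝ} (hy : 1 ≤ y) : y / 2 < shiftFun y := by
  have hy0 : 0 < y := by linarith
  have harctan : 1 / 2 < arctan y := calc
    (1 : ℝ) / 2 < π / 4 := by linarith [pi_gt_three]
    _ = arctan 1 := arctan_one.symm
    _ ≤ arctan y := arctan_strictMono.monotone hy
  calc y / 2 = y * (1 / 2) := by ring
    _ < y * arctan y := by gcongr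
    _ ≤ (1 + y ^ 2) / y * arctan y := by
        gcongr
        rw [le_div_iff₀ hy0]
        nlinarith
    _ = shiftFun y := rfl

lemma existsUnique_shiftFun_eq {t : ℝ} (ht : 1 < t) : ∃! y, 0 < y ∧ shiftFun y = t := by
  set a := √((t - 1) / 2)
  have ha : 0 < a := sqrt_pos.2 (by linarith)
  have hga : shiftFun a < t := by
    have := shiftFun_lt_one_add_sq ha
    rw [sq_sqrt (by linarith)] at this
    linarith
  have hgb : t < shiftFun (2 * t) := by linarith [half_lt_shiftFun (show 1 ≤ 2 * t by linarith)]
  have hab : a ≤ 2 * t :=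
    (strictMonoOn_shiftFun.le_iff_le ha (mem_Ioi.2 (by linarith))).1 (by linarith)
  obtain ⟨y, hy, hyt⟩ := intermediate_value_Icc hab
    (continuousOn_shiftFun.mono fun _ hx => ha.trans_le hx.1) ⟨hga.le, hgb.le⟩
  have hy0 : 0 < y := ha.trans_le hy.1
  refine ⟨y, ⟨hy0, hyt⟩, fun z ⟨hz0, hzt⟩ => ?_⟩
  exact strictMonoOn_shiftFun.injOn hz0 hy0 (hzt.trans hyt.symm)

theorem stmt_3 (c₁ c₂ c₃ lam : ℝ) (h₁ : 0 < c₁) (h₂ : 0 < c₂) (h₃ : 0 < c₃)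
    (hlam : lam < -(c₁ + c₂ + c₃)) :
    ∃! y : ℝ, 0 < y ∧ ((1 + y ^ 2) / y) * arctan y * (c₁ + c₂ + c₃) = -lam := by
  have hC : 0 < c₁ + c₂ + c₃ := by positivity
  have ht : 1 < -lam / (c₁ + c₂ + c₃) := by
    rw [lt_div_iff₀ hC]
    linarith
  simpa only [shiftFun, eq_div_iff hC.ne'] using existsUnique_shiftFun_eq ht
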